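/- arXiv:2603.27728 — 4 statements merged into one kernel-verified Lean document; each statement's English description precedes it below -/
import Mathlib

section
/- Let $q$ be a prime, $d\ge 1$ an integer, $V\le S_d$ a group containing a transitive cyclic subgroup, and $G\le C_q\wr V$ a subgroup surjecting onto $V$ under the natural projection $C_q\wr V\to V$. Set $H:=C_q^d\cap G$, and let $U$ be a subgroup of $C_q^d$ with $H\le U$ and such that $U$ normalizes $G$. Then: (a) $U$ is invariant under conjugation by every element of $G$, making $U$ an $\mathbb{F}_q[V]$-module via $\bar\sigma\cdot u=\sigma u\sigma^{-1}$; (b) writing $Z$ for the intersection of $U$ with the diagonal copy of $C_q$ in $C_q^d$, there is an injective module homomorphism $U/Z\hookrightarrow H$; (c) consequently the index $[U:H]$ divides $q$. -/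
/-- The coordinate-permutation action of `Perm (Fin d)` on a direct power `Fin d → M`,
as a homomorphism into the automorphism group (used to form the wreath product). -/
def permAut (M : Type*) [Group M] (d : ℕ) :
    Equiv.Perm (Fin d) →* MulAut (Fin d → M) where
  toFun π :=
    { toFun := fun f => f ∘ π.symm
      invFun := fun f => f ∘ π
      left_inv := fun f => by funext i; simp
      right_inv := fun f => by funext i; simp
      map_mul' := fun f g => rfl }
  map_one' := by ext f i; rfl
  map_mul' := fun π ρ => by ext f i; rfl

/-- The wreath product `M ≀ Perm (Fin d)` as a semidirect product. -/
abbrev Wreath (M : Type*) [Group M] (d : ℕ) :=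
  SemidirectProduct (Fin d → M) (Equiv.Perm (Fin d)) (permAut M d)

/-- The constant ("diagonal") embedding `M →* (Fin d → M)`. -/
def diagHom (M : Type*) [Group M] (d : ℕ) : M →* (Fin d → M) :=
  MonoidHom.mk' (fun c _ => c) (fun _ _ => rfl)

lemma permAut_apply {M : Type*} [Group M] {d : ℕ} (π : Equiv.Perm (Fin d))
    (f : Fin d → M) : permAut M d π f = f ∘ π.symm := rfl

lemma wreath_comm {M : Type*} [CommGroup M] {d : ℕ}
    (a b : Wreath M d) (ha : a.right = 1) (hb : b.right = 1) : a * b = b * a := by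
  ext
  · simp [ha, hb, mul_comm]
  · simp [ha, hb]

lemma wreath_conj_inl {M : Type*} [CommGroup M] {d : ℕ} (s : Wreath M d)
    (x : Fin d → M) :
    s * SemidirectProduct.inl x * s⁻¹ = SemidirectProduct.inl (permAut M d s.right x) := by
  ext i
  · simp [mul_assoc, mul_comm]
  · simp
/-- Let `q` be a prime, `V ≤ S_d` contain a transitive cyclic subgroup, and let
`G ≤ C_q ≀ V` surject onto `V`.  Put `H := C_q^d ∩ G` and let `U ≤ C_q^d` with `H ≤ U`
and `U` normalizing `G`.  Then:
(a) `U` is invariant under conjugation by every element of `G` (so it is an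
    `𝔽_q[V]`-module via `σ̄·u = σuσ⁻¹`);
(b) with `Z` the intersection of `U` with the diagonal copy of `C_q`, the quotient `U/Z`
    embeds into `H` (there is a homomorphism `U →* H` with kernel exactly `Z`);
(c) consequently `[U : H]` divides `q`. -/
theorem wreath_normalizer_index_divides
    (q d : ℕ) (hq : q.Prime) (hd : 1 ≤ d)
    (V : Subgroup (Equiv.Perm (Fin d)))
    (hVcyc : ∃ σ ∈ V, ∀ i j : Fin d, ∃ n : ℕ, (σ ^ n) i = j)
    (G : Subgroup (Wreath (Multiplicative (ZMod q)) d))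
    (hGV : Subgroup.map (SemidirectProduct.rightHom) G = V)
    (U : Subgroup (Wreath (Multiplicative (ZMod q)) d))
    (hUbase : U ≤ (SemidirectProduct.rightHom :
      Wreath (Multiplicative (ZMod q)) d →* Equiv.Perm (Fin d)).ker)
    (hHU : (SemidirectProduct.rightHom :
      Wreath (Multiplicative (ZMod q)) d →* Equiv.Perm (Fin d)).ker ⊓ G ≤ U)
    (hUnorm : ∀ u ∈ U, ∀ g ∈ G, u * g * u⁻¹ ∈ G) :
    (∀ σ ∈ G, ∀ u ∈ U, σ * u * σ⁻¹ ∈ U) ∧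
    (∃ f : ↥U →* ↥((SemidirectProduct.rightHom :
        Wreath (Multiplicative (ZMod q)) d →* Equiv.Perm (Fin d)).ker ⊓ G),
      ∀ u : ↥U, f u = 1 ↔
        (u : Wreath (Multiplicative (ZMod q)) d) ∈
          U ⊓ (SemidirectProduct.inl.comp (diagHom (Multiplicative (ZMod q)) d)).range) ∧
    ((((SemidirectProduct.rightHom :
        Wreath (Multiplicative (ZMod q)) d →* Equiv.Perm (Fin d)).ker ⊓ G).subgroupOf
          U).index ∣ q) := by
  classical
  haveI : NeZero q := ⟨hq.pos.ne'⟩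
  have hur : ∀ w : Wreath (Multiplicative (ZMod q)) d, w ∈ U → w.right = 1 :=
    fun w hw => hUbase hw
  -- Part (a)
  have parta : ∀ σ ∈ G, ∀ u ∈ U, σ * u * σ⁻¹ ∈ U := by
    intro σ hσ u hu
    have h2 : u⁻¹ * σ⁻¹ * u ∈ G := by
      simpa using hUnorm u⁻¹ (U.inv_mem hu) σ⁻¹ (G.inv_mem hσ)
    have h1 : σ * u⁻¹ * σ⁻¹ * u ∈ G := by
      simpa [mul_assoc] using G.mul_mem hσ h2
    have h1' : σ * u⁻¹ * σ⁻¹ * u ∈ (SemidirectProduct.rightHom :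
        Wreath (Multiplicative (ZMod q)) d →* Equiv.Perm (Fin d)).ker := by
      have hu1 : u.right = 1 := hur u hu
      simp [MonoidHom.mem_ker, hu1]
    have hU1 : σ * u⁻¹ * σ⁻¹ * u ∈ U := hHU ⟨h1', h1⟩
    have heq : σ * u * σ⁻¹ = ((σ * u⁻¹ * σ⁻¹ * u) * u⁻¹)⁻¹ := by group
    rw [heq]
    exact U.inv_mem (U.mul_mem hU1 (U.inv_mem hu))
  refine ⟨parta, ?_⟩
  -- pick a lift s of the transitive cyclic generator τ
  obtain ⟨τ, hτV, hτtrans⟩ := hVcyc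
  rw [← hGV] at hτV
  obtain ⟨s, hsG, hs⟩ := hτV
  have hsr : s.right = τ := hs
  -- the commutator lies in H
  have hcommH : ∀ u : Wreath (Multiplicative (ZMod q)) d, u ∈ U →
      s * u * s⁻¹ * u⁻¹ ∈ (SemidirectProduct.rightHom :
        Wreath (Multiplicative (ZMod q)) d →* Equiv.Perm (Fin d)).ker ⊓ G := by
    intro u hu
    constructor
    · have hu1 : u.right = 1 := hur u hu
      simp [MonoidHom.mem_ker, hu1]
    · have h2 : u * s⁻¹ * u⁻¹ ∈ G := hUnorm u hu s⁻¹ (G.inv_mem hsG)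
      simpa [mul_assoc] using G.mul_mem hsG h2
  -- commutator right component is trivial
  have hcr : ∀ u : Wreath (Multiplicative (ZMod q)) d, u ∈ U →
      (s * u * s⁻¹ * u⁻¹).right = 1 := by
    intro u hu
    simp [hur u hu]
  -- the module homomorphism
  let f : ↥U →* ↥((SemidirectProduct.rightHom :
      Wreath (Multiplicative (ZMod q)) d →* Equiv.Perm (Fin d)).ker ⊓ G) := MonoidHom.mk'
    (fun u => ⟨s * (u : Wreath (Multiplicative (ZMod q)) d) * s⁻¹
        * (u : Wreath (Multiplicative (ZMod q)) d)⁻¹, hcommH u u.2⟩)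
    (by
      intro u v
      apply Subtype.ext
      show s * ((u : Wreath (Multiplicative (ZMod q)) d) * v) * s⁻¹
            * ((u : Wreath (Multiplicative (ZMod q)) d) * v)⁻¹
          = (s * (u : Wreath (Multiplicative (ZMod q)) d) * s⁻¹
              * (u : Wreath (Multiplicative (ZMod q)) d)⁻¹)
            * (s * (v : Wreath (Multiplicative (ZMod q)) d) * s⁻¹
              * (v : Wreath (Multiplicative (ZMod q)) d)⁻¹)
      have hcomm := wreath_comm (u : Wreath (Multiplicative (ZMod q)) d)
        (s * (v : Wreath (Multiplicative (ZMod q)) d) * s⁻¹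
          * (v : Wreath (Multiplicative (ZMod q)) d)⁻¹)
        (hur _ u.2) (hcr _ v.2)
      have h2 : (u : Wreath (Multiplicative (ZMod q)) d)
            * (s * (v : Wreath (Multiplicative (ZMod q)) d) * s⁻¹
              * (v : Wreath (Multiplicative (ZMod q)) d)⁻¹)
            * (u : Wreath (Multiplicative (ZMod q)) d)⁻¹
          = s * (v : Wreath (Multiplicative (ZMod q)) d) * s⁻¹
              * (v : Wreath (Multiplicative (ZMod q)) d)⁻¹ := by
        rw [hcomm]; group
      have expand : s * ((u : Wreath (Multiplicative (ZMod q)) d) * v) * s⁻¹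
            * ((u : Wreath (Multiplicative (ZMod q)) d) * v)⁻¹
          = (s * (u : Wreath (Multiplicative (ZMod q)) d) * s⁻¹
              * (u : Wreath (Multiplicative (ZMod q)) d)⁻¹)
            * ((u : Wreath (Multiplicative (ZMod q)) d)
              * (s * (v : Wreath (Multiplicative (ZMod q)) d) * s⁻¹
                * (v : Wreath (Multiplicative (ZMod q)) d)⁻¹)
              * (u : Wreath (Multiplicative (ZMod q)) d)⁻¹) := by group
      rw [expand, h2])
  -- elements of U are of the form inl x
  have huinl : ∀ u : Wreath (Multiplicative (ZMod q)) d, u ∈ U →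
      u = SemidirectProduct.inl u.left := by
    intro u hu
    conv_lhs => rw [← SemidirectProduct.inl_left_mul_inr_right u]
    rw [hur u hu, map_one, mul_one]
  -- value of f as inl of an explicit element
  have hval : ∀ u : ↥U, ((f u : Wreath (Multiplicative (ZMod q)) d)) =
      SemidirectProduct.inl
        (permAut (Multiplicative (ZMod q)) d τ
          (u : Wreath (Multiplicative (ZMod q)) d).left
          * ((u : Wreath (Multiplicative (ZMod q)) d).left)⁻¹) := by
    intro u
    show s * (u : Wreath (Multiplicative (ZMod q)) d) * s⁻¹
        * (u : Wreath (Multiplicative (ZMod q)) d)⁻¹ = _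
    conv_lhs => rw [huinl _ u.2]
    calc s * SemidirectProduct.inl (u : Wreath (Multiplicative (ZMod q)) d).left * s⁻¹
          * (SemidirectProduct.inl (u : Wreath (Multiplicative (ZMod q)) d).left)⁻¹
        = (s * SemidirectProduct.inl (u : Wreath (Multiplicative (ZMod q)) d).left * s⁻¹)
            * SemidirectProduct.inl ((u : Wreath (Multiplicative (ZMod q)) d).left)⁻¹ := by
          rw [map_inv]
      _ = SemidirectProduct.inl
            (permAut (Multiplicative (ZMod q)) d s.right
              (u : Wreath (Multiplicative (ZMod q)) d).left)
            * SemidirectProduct.inl ((u : Wreath (Multiplicative (ZMod q)) d).left)⁻¹ := by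
          rw [wreath_conj_inl]
      _ = SemidirectProduct.inl
            (permAut (Multiplicative (ZMod q)) d τ
              (u : Wreath (Multiplicative (ZMod q)) d).left
              * ((u : Wreath (Multiplicative (ZMod q)) d).left)⁻¹) := by
          rw [hsr, map_mul]
  -- kernel characterization
  have hker : ∀ u : ↥U, f u = 1 ↔
      (u : Wreath (Multiplicative (ZMod q)) d) ∈
        U ⊓ (SemidirectProduct.inl.comp (diagHom (Multiplicative (ZMod q)) d)).range := by
    intro u
    constructor
    · intro h1
      have h1' : ((f u : Wreath (Multiplicative (ZMod q)) d)) = 1 := by rw [h1]; rfl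
      rw [hval u] at h1'
      have hx : permAut (Multiplicative (ZMod q)) d τ
            (u : Wreath (Multiplicative (ZMod q)) d).left
          * ((u : Wreath (Multiplicative (ZMod q)) d).left)⁻¹ = 1 := by
        apply SemidirectProduct.inl_injective (φ := permAut (Multiplicative (ZMod q)) d)
        rw [map_one]
        exact h1'
      have hfix : ∀ i, (u : Wreath (Multiplicative (ZMod q)) d).left (τ.symm i)
          = (u : Wreath (Multiplicative (ZMod q)) d).left i := by
        intro i
        have := congrFun (mul_inv_eq_one.mp hx) i
        simpa [permAut_apply] using this
      have hfix' : ∀ i, (u : Wreath (Multiplicative (ZMod q)) d).left (τ i)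
          = (u : Wreath (Multiplicative (ZMod q)) d).left i := by
        intro i
        have := hfix (τ i)
        simpa using this.symm
      have hconst : ∀ (n : ℕ) (i : Fin d),
          (u : Wreath (Multiplicative (ZMod q)) d).left ((τ ^ n) i)
            = (u : Wreath (Multiplicative (ZMod q)) d).left i := by
        intro n
        induction n with
        | zero => intro i; simp
        | succ n ih =>
          intro i
          have hpow : (τ ^ (n + 1)) i = τ ((τ ^ n) i) := by
            rw [pow_succ']; rfl
          rw [hpow, hfix', ih]
      have hdiag : diagHom (Multiplicative (ZMod q)) d
            ((u : Wreath (Multiplicative (ZMod q)) d).left ⟨0, hd⟩)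
          = (u : Wreath (Multiplicative (ZMod q)) d).left := by
        funext i
        show (u : Wreath (Multiplicative (ZMod q)) d).left ⟨0, hd⟩
            = (u : Wreath (Multiplicative (ZMod q)) d).left i
        obtain ⟨n, hn⟩ := hτtrans ⟨0, hd⟩ i
        rw [← hn, hconst]
      refine ⟨u.2, (u : Wreath (Multiplicative (ZMod q)) d).left ⟨0, hd⟩, ?_⟩
      calc (SemidirectProduct.inl.comp (diagHom (Multiplicative (ZMod q)) d))
            ((u : Wreath (Multiplicative (ZMod q)) d).left ⟨0, hd⟩)
          = SemidirectProduct.inl ((u : Wreath (Multiplicative (ZMod q)) d).left) := by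
            rw [MonoidHom.comp_apply, hdiag]
        _ = (u : Wreath (Multiplicative (ZMod q)) d) := (huinl _ u.2).symm
    · rintro ⟨-, c, hc⟩
      have hleft : (u : Wreath (Multiplicative (ZMod q)) d).left = fun _ => c := by
        rw [← hc]; rfl
      apply Subtype.ext
      show ((f u : Wreath (Multiplicative (ZMod q)) d)) = 1
      rw [hval u, hleft]
      have hfixc : permAut (Multiplicative (ZMod q)) d τ
          (fun _ => c : Fin d → Multiplicative (ZMod q)) = fun _ => c := rfl
      rw [hfixc]
      simp
  refine ⟨⟨f, hker⟩, ?_⟩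
  -- Part (c): index divides q
  haveI : Finite (Wreath (Multiplicative (ZMod q)) d) := Finite.of_injective
    (fun g : Wreath (Multiplicative (ZMod q)) d => (g.left, g.right))
    (fun a b h => SemidirectProduct.ext (congrArg Prod.fst h) (congrArg Prod.snd h))
  -- the kernel injects into M via a group hom
  have hgKmul : ∀ a b : ↥f.ker,
      (((a * b : ↥f.ker) : ↥U) : Wreath (Multiplicative (ZMod q)) d).left ⟨0, hd⟩
        = (((a : ↥U) : Wreath (Multiplicative (ZMod q)) d).left ⟨0, hd⟩)
          * (((b : ↥U) : Wreath (Multiplicative (ZMod q)) d).left ⟨0, hd⟩) := by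
    intro a b
    have : (((a * b : ↥f.ker) : ↥U) : Wreath (Multiplicative (ZMod q)) d)
        = ((a : ↥U) : Wreath (Multiplicative (ZMod q)) d)
          * ((b : ↥U) : Wreath (Multiplicative (ZMod q)) d) := rfl
    rw [this, SemidirectProduct.mul_left, hur _ (a : ↥U).2]
    simp
  let gK : ↥f.ker →* Multiplicative (ZMod q) := MonoidHom.mk'
    (fun k => ((k : ↥U) : Wreath (Multiplicative (ZMod q)) d).left ⟨0, hd⟩) hgKmul
  have hKinj : Function.Injective gK := by
    intro k₁ k₂ h
    obtain ⟨-, c₁, hc₁⟩ := (hker _).mp k₁.2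
    obtain ⟨-, c₂, hc₂⟩ := (hker _).mp k₂.2
    have e₁ : ((k₁ : ↥U) : Wreath (Multiplicative (ZMod q)) d).left = fun _ => c₁ := by
      rw [← hc₁]; rfl
    have e₂ : ((k₂ : ↥U) : Wreath (Multiplicative (ZMod q)) d).left = fun _ => c₂ := by
      rw [← hc₂]; rfl
    have hcc : c₁ = c₂ := by
      have t1 := congrFun e₁ (⟨0, hd⟩ : Fin d)
      have t2 := congrFun e₂ (⟨0, hd⟩ : Fin d)
      exact t1.symm.trans (h.trans t2)
    apply Subtype.ext; apply Subtype.ext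
    rw [← hc₁, ← hc₂, hcc]
  have hKcard : Nat.card ↥f.ker ∣ q := by
    have h1 : Nat.card ↥f.ker = Nat.card ↥gK.range :=
      Nat.card_congr (MonoidHom.ofInjective hKinj).toEquiv
    have h2 : Nat.card ↥gK.range ∣ Nat.card (Multiplicative (ZMod q)) :=
      Subgroup.card_subgroup_dvd_card gK.range
    have h3 : Nat.card (Multiplicative (ZMod q)) = q := Nat.card_zmod q
    rw [h1]
    rw [h3] at h2
    exact h2
  have hQH : Nat.card (↥U ⧸ f.ker) ∣ Nat.card
      ↥((SemidirectProduct.rightHom : Wreath (Multiplicative (ZMod q)) d →*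
          Equiv.Perm (Fin d)).ker ⊓ G) := by
    have e : Nat.card (↥U ⧸ f.ker) = Nat.card ↥f.range :=
      Nat.card_congr (QuotientGroup.quotientKerEquivRange f).toEquiv
    rw [e]
    exact Subgroup.card_subgroup_dvd_card f.range
  have hHcard : Nat.card ↥(((SemidirectProduct.rightHom : Wreath (Multiplicative (ZMod q)) d →*
        Equiv.Perm (Fin d)).ker ⊓ G).subgroupOf U) = Nat.card ↥((SemidirectProduct.rightHom : Wreath (Multiplicative (ZMod q)) d →*
        Equiv.Perm (Fin d)).ker ⊓ G) :=
    Nat.card_congr (Subgroup.subgroupOfEquivOfLe hHU).toEquiv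
  have hLag : Nat.card ↥(((SemidirectProduct.rightHom : Wreath (Multiplicative (ZMod q)) d →*
        Equiv.Perm (Fin d)).ker ⊓ G).subgroupOf U) * (((SemidirectProduct.rightHom : Wreath (Multiplicative (ZMod q)) d →*
        Equiv.Perm (Fin d)).ker ⊓ G).subgroupOf U).index = Nat.card ↥U :=
    Subgroup.card_mul_index _
  have hLagK : Nat.card ↥f.ker * Nat.card (↥U ⧸ f.ker) = Nat.card ↥U := by
    rw [← Subgroup.index_eq_card]
    exact Subgroup.card_mul_index _
  obtain ⟨m, hm⟩ := hQH
  have hQpos : 0 < Nat.card (↥U ⧸ f.ker) := Nat.card_pos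
  have key : (((SemidirectProduct.rightHom : Wreath (Multiplicative (ZMod q)) d →*
        Equiv.Perm (Fin d)).ker ⊓ G).subgroupOf U).index * m = Nat.card ↥f.ker := by
    have h1 : Nat.card (↥U ⧸ f.ker) * ((((SemidirectProduct.rightHom : Wreath (Multiplicative (ZMod q)) d →*
        Equiv.Perm (Fin d)).ker ⊓ G).subgroupOf U).index * m)
        = Nat.card (↥U ⧸ f.ker) * Nat.card ↥f.ker := by
      calc Nat.card (↥U ⧸ f.ker) * ((((SemidirectProduct.rightHom : Wreath (Multiplicative (ZMod q)) d →*
        Equiv.Perm (Fin d)).ker ⊓ G).subgroupOf U).index * m)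
          = (Nat.card (↥U ⧸ f.ker) * m) * (((SemidirectProduct.rightHom : Wreath (Multiplicative (ZMod q)) d →*
        Equiv.Perm (Fin d)).ker ⊓ G).subgroupOf U).index := by ring
        _ = Nat.card ↥((SemidirectProduct.rightHom : Wreath (Multiplicative (ZMod q)) d →*
        Equiv.Perm (Fin d)).ker ⊓ G) * (((SemidirectProduct.rightHom : Wreath (Multiplicative (ZMod q)) d →*
        Equiv.Perm (Fin d)).ker ⊓ G).subgroupOf U).index := by rw [← hm]
        _ = Nat.card ↥(((SemidirectProduct.rightHom : Wreath (Multiplicative (ZMod q)) d →*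
        Equiv.Perm (Fin d)).ker ⊓ G).subgroupOf U) * (((SemidirectProduct.rightHom : Wreath (Multiplicative (ZMod q)) d →*
        Equiv.Perm (Fin d)).ker ⊓ G).subgroupOf U).index := by rw [hHcard]
        _ = Nat.card ↥U := hLag
        _ = Nat.card ↥f.ker * Nat.card (↥U ⧸ f.ker) := hLagK.symm
        _ = Nat.card (↥U ⧸ f.ker) * Nat.card ↥f.ker := by ring
    exact Nat.eq_of_mul_eq_mul_left hQpos h1
  exact dvd_trans (Dvd.intro m key) hKcard
end

section
/- Let $q$ be a prime, $d$ a positive integer, $G\le \mathrm{AGL}_1(q)\wr S_d$, and $N\trianglelefteq G$ a normal subgroup. Set $G_q:=G\cap C_q^d$ and $N_q:=N\cap C_q^d$. Assume $N$ contains an element $\sigma$ whose image in $S_d$ is a $d$-cycle and with $\sigma^d\in N_q$. Then $G_q/Z$ embeds into $N_q$, where $Z$ is the intersection of $G_q$ with the diagonal under the action of $\sigma$; in particular $[G_q:N_q]$ divides $q$. If moreover $\sigma$ acts on the $qd$ points as a $qd$-cycle and $\gcd(d,q)=1$, then $G_q=N_q$. -/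
/-!
Conjugation by `σ` acts on the translations `C_q^d = (ZMod q)^d` by a twisted cyclic shift `T`,
and `x ↦ ⁅x, σ⁆` is a homomorphism `G_q → N_q` (translations commute, `N` is normal) with kernel
`Z`. Since `π` is a `d`-cycle, a `T`-fixed vector is determined by one coordinate, so `|Z| ∣ q`
and hence `[G_q : N_q] ∣ |Z| ∣ q`.

If `σ` is a `qd`-cycle then `σ^d` is a nonzero `T`-fixed translation, so every `T`-fixed vector
is a multiple of it and lies in `N_q`. For `u ∈ G_q` each `u - T^k u` lies in `N_q`; summing over
`k < d` and adding the fixed vector `∑ T^k u` gives `d u ∈ N_q`, and `gcd(d, q) = 1` gives `u ∈ N_q`.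
-/

/-- The homomorphism realizing the translation group `C_q^d` inside the wreath product
`AGL₁(q) ≀ S_d ≤ Sym(Fin d × ZMod q)`: the tuple `b` acts by `(i, x) ↦ (i, x + b i)`. -/
def blockTranslations (q d : ℕ) :
    Multiplicative (Fin d → ZMod q) →* Equiv.Perm (Fin d × ZMod q) :=
  MonoidHom.mk'
    (fun b => Equiv.prodShear (Equiv.refl (Fin d))
      (fun i => Equiv.addRight (Multiplicative.toAdd b i)))
    (by
      intro a b
      ext ⟨i, x⟩
      · rfl
      · simp [Equiv.prodShear, add_comm, add_assoc, add_left_comm])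

/-- An element of `Sym(Fin d × ZMod q)` lies in the wreath product `AGL₁(q) ≀ S_d` if it
acts by `(i, x) ↦ (π i, aᵢ·x + bᵢ)` for a permutation `π` of the blocks and affine maps on
the blocks. -/
def IsAGLWreath (q d : ℕ) (g : Equiv.Perm (Fin d × ZMod q)) : Prop :=
  ∃ (π : Equiv.Perm (Fin d)) (a : Fin d → (ZMod q)ˣ) (b : Fin d → ZMod q),
    ∀ (i : Fin d) (x : ZMod q), g (i, x) = (π i, (a i : ZMod q) * x + b i)

open Equiv
open scoped commutatorElement

section TwistedShift

variable {ι R : Type*}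

/-- Conjugation by `(i, x) ↦ (π i, aᵢ x + bᵢ)` acts on block translations by this map. -/
def twistedShift [CommSemiring R] (π : Perm ι) (a : ι → Rˣ) : (ι → R) →ₗ[R] (ι → R) where
  toFun v j := a (π.symm j) * v (π.symm j)
  map_add' u v := by ext j; simp [mul_add]
  map_smul' c v := by ext j; simp [mul_left_comm]

@[simp]
lemma twistedShift_apply_apply [CommSemiring R] (π : Perm ι) (a : ι → Rˣ) (v : ι → R) (i : ι) :
    twistedShift π a v (π i) = a i * v i := by
  simp [twistedShift]

lemma apply_eq_zero_of_twistedShift_eq_self [CommSemiring R] [Finite ι] {π : Perm ι}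
    {a : ι → Rˣ} {v : ι → R} (hv : twistedShift π a v = v) {i j : ι} (hij : π.SameCycle i j)
    (hi : v i = 0) : v j = 0 := by
  obtain ⟨k, rfl⟩ := hij.exists_nat_pow_eq
  rw [Perm.coe_pow]
  exact Function.Iterate.rec (fun x => v x = 0) hi
    (fun x hx => by rw [← hv, twistedShift_apply_apply, hx, mul_zero]) k

lemma eq_smul_of_twistedShift_eq_self [Field R] [Finite ι] {π : Perm ι} {a : ι → Rˣ}
    (hπ : ∀ i j, π.SameCycle i j) {s v : ι → R} (hs : twistedShift π a s = s) {i : ι}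
    (hsi : s i ≠ 0) (hv : twistedShift π a v = v) : v = (v i / s i) • s := by
  rw [← sub_eq_zero]
  ext j
  refine apply_eq_zero_of_twistedShift_eq_self (a := a) (v := v - (v i / s i) • s) ?_ (hπ i j) ?_
  · rw [map_sub, map_smul, hv, hs]
  · simp [div_mul_cancel₀ _ hsi]

end TwistedShift

/-- `n • u` is the sum of the `u - T^[k] u ∈ W` for `k < n` and of the `T`-fixed trace
`∑ k < n, T^[k] u`. -/
lemma AddSubgroup.nsmul_mem_of_sub_apply_mem {V : Type*} [AddCommGroup V] (T : V →+ V)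
    (W : AddSubgroup V) (hW : ∀ w ∈ W, T w ∈ W) (hfix : ∀ v, T v = v → v ∈ W) {u : V} {n : ℕ}
    (hper : T^[n] u = u) (hu : u - T u ∈ W) : n • u ∈ W := by
  have horbit : ∀ k, u - T^[k] u ∈ W := by
    intro k
    induction k with
    | zero => simp
    | succ k ih =>
      rw [Function.iterate_succ_apply', show u - T (T^[k] u) = (u - T u) + T (u - T^[k] u) by
        rw [map_sub]; abel]
      exact add_mem hu (hW _ ih)
  have htrace : T (∑ k ∈ Finset.range n, T^[k] u) = ∑ k ∈ Finset.range n, T^[k] u := by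
    rw [map_sum]
    simp_rw [← Function.iterate_succ_apply' T]
    have hshift := (Finset.sum_range_succ' (fun k => T^[k] u) n).symm.trans
      (Finset.sum_range_succ (fun k => T^[k] u) n)
    rw [hper, Function.iterate_zero_apply] at hshift
    exact add_right_cancel hshift
  have hsplit : n • u = ∑ k ∈ Finset.range n, (u - T^[k] u) + ∑ k ∈ Finset.range n, T^[k] u := by
    simp
  rw [hsplit]
  exact add_mem (sum_mem fun k _ => horbit k) (hfix _ htrace)

lemma AddSubgroup.mem_of_nsmul_mem_of_coprime {A : Type*} [AddCommGroup A] (W : AddSubgroup A)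
    {m n : ℕ} (hmn : m.Coprime n) {u : A} (hm : m • u ∈ W) (hn : n • u ∈ W) : u ∈ W := by
  have hbezout : u = Nat.gcdA m n • m • u + Nat.gcdB m n • n • u := by
    rw [← natCast_zsmul, ← natCast_zsmul, smul_smul, smul_smul, ← add_smul, mul_comm,
      mul_comm (Nat.gcdB m n), ← Nat.gcd_eq_gcd_ab, hmn.gcd_eq_one, Nat.cast_one, one_smul]
  rw [hbezout]
  exact add_mem (zsmul_mem hm _) (zsmul_mem hn _)

lemma commutatorElement_mem_of_conj_mem {G : Type*} [Group G] {H K : Subgroup G}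
    (hK : ∀ g ∈ H, ∀ n ∈ K, g * n * g⁻¹ ∈ K) {g k : G} (hg : g ∈ H) (hk : k ∈ K) : ⁅g, k⁆ ∈ K :=
  mul_mem (hK g hg k hk) (inv_mem hk)

lemma Equiv.Perm.IsCycle.pow_ne_one {α : Type*} [Fintype α] {σ : Perm α} (hσ : σ.IsCycle)
    (hfull : ∀ z, σ z ≠ z) {n : ℕ} (hn0 : 0 < n) (hn : n < Fintype.card α) : σ ^ n ≠ 1 := by
  classical
  have hsupp : σ.support = Finset.univ :=
    Finset.eq_univ_iff_forall.mpr fun z => Perm.mem_support.mpr (hfull z)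
  refine pow_ne_one_of_lt_orderOf hn0.ne' ?_
  rwa [hσ.orderOf, hsupp, Finset.card_univ]

lemma Subgroup.index_subgroupOf_dvd_card_ker {G : Type*} [Group G] {A B : Subgroup G} [Finite A]
    (hBA : B ≤ A) (f : A →* B) : (B.subgroupOf A).index ∣ Nat.card f.ker := by
  let f' : A →* A := (inclusion hBA).comp f
  have hrange : f'.range ≤ B.subgroupOf A := by
    rintro _ ⟨x, rfl⟩
    exact (f x).2
  have hker : f'.ker = f.ker := MonoidHom.ker_comp_of_injective _ _ (inclusion_injective hBA)
  simpa only [index_range, hker] using index_dvd_of_le hrange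

section Translations

variable {q d : ℕ}

def translation (q d : ℕ) (v : Fin d → ZMod q) : Perm (Fin d × ZMod q) :=
  blockTranslations q d (Multiplicative.ofAdd v)

@[simp]
lemma translation_apply (v : Fin d → ZMod q) (i : Fin d) (x : ZMod q) :
    translation q d v (i, x) = (i, x + v i) := rfl

lemma translation_add (u v : Fin d → ZMod q) :
    translation q d (u + v) = translation q d u * translation q d v :=
  map_mul (blockTranslations q d) _ _

lemma translation_zero : translation q d 0 = 1 := map_one (blockTranslations q d)

lemma translation_neg (v : Fin d → ZMod q) : translation q d (-v) = (translation q d v)⁻¹ :=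
  map_inv (blockTranslations q d) _

lemma translation_nsmul (n : ℕ) (v : Fin d → ZMod q) :
    translation q d (n • v) = translation q d v ^ n := by
  rw [translation, ofAdd_nsmul, map_pow]
  rfl

lemma translation_injective : Function.Injective (translation q d) := by
  intro u v h
  ext i
  simpa using congrArg (fun g : Perm (Fin d × ZMod q) => (g (i, 0)).2) h

lemma blockTranslations_injective : Function.Injective (blockTranslations q d) :=
  fun _ _ h => Multiplicative.toAdd.injective (translation_injective h)

lemma mem_range_blockTranslations {g : Perm (Fin d × ZMod q)} :
    g ∈ (blockTranslations q d).range ↔ ∃ v, translation q d v = g :=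
  MonoidHom.mem_range.trans Multiplicative.ofAdd.surjective.exists

def translationVectors (H : Subgroup (Perm (Fin d × ZMod q))) : AddSubgroup (Fin d → ZMod q) :=
  Subgroup.toAddSubgroup' (H.comap (blockTranslations q d))

lemma mem_translationVectors {H : Subgroup (Perm (Fin d × ZMod q))} {v : Fin d → ZMod q} :
    v ∈ translationVectors H ↔ translation q d v ∈ H := Iff.rfl

end Translations

namespace AffineBlockPerm

variable {q d : ℕ} {σ : Perm (Fin d × ZMod q)} {π : Perm (Fin d)} {a : Fin d → (ZMod q)ˣ}
  {b : Fin d → ZMod q}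

lemma conj_translation (hσ : ∀ i x, σ (i, x) = (π i, (a i : ZMod q) * x + b i))
    (v : Fin d → ZMod q) : σ * translation q d v * σ⁻¹ = translation q d (twistedShift π a v) := by
  rw [mul_inv_eq_iff_eq_mul]
  ext ⟨i, x⟩
  · simp [hσ]
  · simp only [Perm.mul_apply, translation_apply, hσ, twistedShift_apply_apply]
    ring

lemma pow_conj_translation (hσ : ∀ i x, σ (i, x) = (π i, (a i : ZMod q) * x + b i)) (k : ℕ)
    (v : Fin d → ZMod q) :
    σ ^ k * translation q d v * (σ ^ k)⁻¹ = translation q d ((twistedShift π a)^[k] v) := by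
  induction k with
  | zero => simp
  | succ k ih =>
    rw [Function.iterate_succ_apply', ← conj_translation hσ, ← ih, pow_succ']
    group

lemma commute_translation_iff (hσ : ∀ i x, σ (i, x) = (π i, (a i : ZMod q) * x + b i))
    (v : Fin d → ZMod q) : Commute σ (translation q d v) ↔ twistedShift π a v = v := by
  rw [Commute, SemiconjBy, ← mul_inv_eq_iff_eq_mul, conj_translation hσ,
    translation_injective.eq_iff]

lemma commutatorElement_translation (hσ : ∀ i x, σ (i, x) = (π i, (a i : ZMod q) * x + b i))
    (u : Fin d → ZMod q) :
    ⁅translation q d u, σ⁆ = translation q d (u - twistedShift π a u) := by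
  rw [commutatorElement_def, mul_assoc, mul_assoc, ← mul_assoc σ, ← translation_neg,
    conj_translation hσ, ← translation_add, map_neg, sub_eq_add_neg]

lemma commutatorElement_mem_range (hσ : ∀ i x, σ (i, x) = (π i, (a i : ZMod q) * x + b i))
    {g : Perm (Fin d × ZMod q)} (hg : g ∈ (blockTranslations q d).range) :
    ⁅g, σ⁆ ∈ (blockTranslations q d).range := by
  obtain ⟨u, rfl⟩ := mem_range_blockTranslations.mp hg
  rw [commutatorElement_translation hσ]
  exact mem_range_blockTranslations.mpr ⟨_, rfl⟩

lemma commutatorElement_mul (hσ : ∀ i x, σ (i, x) = (π i, (a i : ZMod q) * x + b i))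
    {g h : Perm (Fin d × ZMod q)} (hg : g ∈ (blockTranslations q d).range)
    (hh : h ∈ (blockTranslations q d).range) : ⁅g * h, σ⁆ = ⁅g, σ⁆ * ⁅h, σ⁆ := by
  obtain ⟨u, rfl⟩ := mem_range_blockTranslations.mp hg
  obtain ⟨v, rfl⟩ := mem_range_blockTranslations.mp hh
  simp only [← translation_add, commutatorElement_translation hσ, map_add]
  congr 1
  abel

/-- Translations commuting with `σ` are determined by their translation on a single block. -/
lemma card_dvd_of_le_inf_centralizer (hσ : ∀ i x, σ (i, x) = (π i, (a i : ZMod q) * x + b i))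
    (hπ : ∀ i j, π.SameCycle i j) (i₀ : Fin d) {K : Subgroup (Perm (Fin d × ZMod q))}
    (hK : K ≤ (blockTranslations q d).range ⊓ Subgroup.centralizer {σ}) : Nat.card K ∣ q := by
  let e := MonoidHom.ofInjective (f := blockTranslations q d) blockTranslations_injective
  let ψ : K →* Multiplicative (ZMod q) :=
    (AddMonoidHom.toMultiplicative (Pi.evalAddMonoidHom (fun _ => ZMod q) i₀)).comp
      (e.symm.toMonoidHom.comp (Subgroup.inclusion (hK.trans inf_le_left)))
  have hψ : Function.Injective ψ := by
    rw [injective_iff_map_eq_one]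
    intro g hg
    set u := Multiplicative.toAdd (e.symm (Subgroup.inclusion (hK.trans inf_le_left) g))
    have hu : translation q d u = g :=
      MonoidHom.apply_ofInjective_symm blockTranslations_injective _
    have hfix : twistedShift π a u = u := by
      rw [← commute_translation_iff hσ, hu]
      exact (Subgroup.mem_centralizer_singleton_iff.mp (hK g.2).2).symm
    have hu0 : u = 0 := funext fun j => apply_eq_zero_of_twistedShift_eq_self hfix (hπ i₀ j) hg
    ext1
    rw [← hu, hu0, translation_zero, Subgroup.coe_one]
  simpa [Nat.card_congr Multiplicative.toAdd] using Subgroup.card_dvd_of_injective ψ hψ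

variable {G N : Subgroup (Perm (Fin d × ZMod q))}

def commutatorHom (hσ : ∀ i x, σ (i, x) = (π i, (a i : ZMod q) * x + b i)) (hσN : σ ∈ N)
    (hnormal : ∀ g ∈ G, ∀ n ∈ N, g * n * g⁻¹ ∈ N) :
    ↥((blockTranslations q d).range ⊓ G) →* ↥((blockTranslations q d).range ⊓ N) where
  toFun x := ⟨⁅(x : Perm (Fin d × ZMod q)), σ⁆, commutatorElement_mem_range hσ x.2.1,
    commutatorElement_mem_of_conj_mem hnormal x.2.2 hσN⟩
  map_one' := Subtype.ext (commutatorElement_one_left σ)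
  map_mul' x y := Subtype.ext (commutatorElement_mul hσ x.2.1 y.2.1)

lemma commutatorHom_eq_one_iff (hσ : ∀ i x, σ (i, x) = (π i, (a i : ZMod q) * x + b i))
    (hσN : σ ∈ N) (hnormal : ∀ g ∈ G, ∀ n ∈ N, g * n * g⁻¹ ∈ N)
    (x : ↥((blockTranslations q d).range ⊓ G)) :
    commutatorHom hσ hσN hnormal x = 1 ↔ (x : Perm (Fin d × ZMod q)) ∈ Subgroup.centralizer {σ} := by
  rw [Subgroup.mem_centralizer_singleton_iff, ← commutatorElement_eq_one_iff_mul_comm,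
    ← Subtype.val_inj]
  rfl

lemma translation_mem_of_coprime (hq : q.Prime)
    (hσ : ∀ i x, σ (i, x) = (π i, (a i : ZMod q) * x + b i)) (hπ : ∀ i j, π.SameCycle i j)
    (i₀ : Fin d) (hσcyc : σ.IsCycle ∧ ∀ z, σ z ≠ z) (hcop : d.Coprime q) (hσN : σ ∈ N)
    (hNG : N ≤ G) (hnormal : ∀ g ∈ G, ∀ n ∈ N, g * n * g⁻¹ ∈ N)
    (hσd : σ ^ d ∈ (blockTranslations q d).range) {u : Fin d → ZMod q}
    (hu : translation q d u ∈ G) : translation q d u ∈ N := by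
  have : Fact q.Prime := ⟨hq⟩
  obtain ⟨s, hs⟩ := mem_range_blockTranslations.mp hσd
  have hTs : twistedShift π a s = s := (commute_translation_iff hσ s).mp (hs ▸ Commute.self_pow σ d)
  have hs0 : s i₀ ≠ 0 := by
    intro h
    refine hσcyc.1.pow_ne_one hσcyc.2 i₀.pos ?_ (hs ▸ ?_)
    · simpa [ZMod.card] using lt_mul_of_one_lt_right i₀.pos hq.one_lt
    · rw [show s = 0 from funext fun j => apply_eq_zero_of_twistedShift_eq_self hTs (hπ i₀ j) h,
        translation_zero]
  have hper : (twistedShift π a)^[d] u = u := by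
    apply translation_injective
    rw [← pow_conj_translation hσ, ← hs, ← translation_neg, ← translation_add, ← translation_add,
      add_neg_cancel_comm]
  have hinv : ∀ w ∈ translationVectors N, twistedShift π a w ∈ translationVectors N := by
    intro w hw
    rw [mem_translationVectors, ← conj_translation hσ]
    exact hnormal σ (hNG hσN) _ hw
  have hfix : ∀ v, twistedShift π a v = v → v ∈ translationVectors N := by
    intro v hv
    rw [eq_smul_of_twistedShift_eq_self hπ hTs hs0 hv, ← ZMod.natCast_zmod_val (v i₀ / s i₀),
      Nat.cast_smul_eq_nsmul, mem_translationVectors, translation_nsmul, hs]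
    exact pow_mem (pow_mem hσN d) _
  have hcomm : u - twistedShift π a u ∈ translationVectors N := by
    rw [mem_translationVectors, ← commutatorElement_translation hσ]
    exact commutatorElement_mem_of_conj_mem hnormal hu hσN
  have hdu := AddSubgroup.nsmul_mem_of_sub_apply_mem (twistedShift π a).toAddMonoidHom _ hinv hfix
    hper hcomm
  have hqu : q • u ∈ translationVectors N := by
    rw [show q • u = 0 by ext; simp]
    exact zero_mem _
  exact AddSubgroup.mem_of_nsmul_mem_of_coprime _ hcop hdu hqu

end AffineBlockPerm

open AffineBlockPerm in
theorem normal_subgroup_translation_part_index_general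
    (q d : ℕ) (hq : q.Prime)
    (G N : Subgroup (Equiv.Perm (Fin d × ZMod q)))
    (hNG : N ≤ G) (hnormal : ∀ g ∈ G, ∀ n ∈ N, g * n * g⁻¹ ∈ N)
    (σ : Equiv.Perm (Fin d × ZMod q)) (hσN : σ ∈ N)
    (π : Equiv.Perm (Fin d)) (a : Fin d → (ZMod q)ˣ) (b : Fin d → ZMod q)
    (hσform : ∀ (i : Fin d) (x : ZMod q), σ (i, x) = (π i, (a i : ZMod q) * x + b i))
    (hπ : π.IsCycle ∧ ∀ i : Fin d, π i ≠ i)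
    (hσd : σ ^ d ∈ (blockTranslations q d).range) :
    (∃ f : ↥((blockTranslations q d).range ⊓ G) →* ↥((blockTranslations q d).range ⊓ N),
      ∀ x : ↥((blockTranslations q d).range ⊓ G),
        f x = 1 ↔ (x : Equiv.Perm (Fin d × ZMod q)) ∈
          (blockTranslations q d).range ⊓ G ⊓ Subgroup.centralizer {σ}) ∧
    ((((blockTranslations q d).range ⊓ N).subgroupOf
        ((blockTranslations q d).range ⊓ G)).index ∣ q) ∧
    ((σ.IsCycle ∧ ∀ z : Fin d × ZMod q, σ z ≠ z) → Nat.Coprime d q →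
      (blockTranslations q d).range ⊓ G = (blockTranslations q d).range ⊓ N) := by
  have : NeZero q := ⟨hq.ne_zero⟩
  obtain ⟨i₀, -⟩ := hπ.1
  have hπ' : ∀ i j, π.SameCycle i j := fun i j => hπ.1.sameCycle (hπ.2 i) (hπ.2 j)
  set f := commutatorHom hσform hσN hnormal
  have hf : ∀ x, f x = 1 ↔ (x : Perm (Fin d × ZMod q)) ∈
      (blockTranslations q d).range ⊓ G ⊓ Subgroup.centralizer {σ} := fun x =>
    (commutatorHom_eq_one_iff hσform hσN hnormal x).trans (and_iff_right x.2).symm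
  have hker : f.ker.map (Subgroup.subtype _) ≤
      (blockTranslations q d).range ⊓ Subgroup.centralizer {σ} := by
    rintro _ ⟨x, hx, rfl⟩
    exact ⟨x.2.1, ((hf x).mp hx).2⟩
  refine ⟨⟨f, hf⟩, ?_, fun hσcyc hcop => ?_⟩
  · refine (Subgroup.index_subgroupOf_dvd_card_ker (inf_le_inf_left _ hNG) f).trans ?_
    rw [← Subgroup.card_map_of_injective (Subgroup.subtype_injective _)]
    exact card_dvd_of_le_inf_centralizer hσform hπ' i₀ hker
  · refine le_antisymm (fun g ⟨hgR, hgG⟩ => ⟨hgR, ?_⟩) (inf_le_inf_left _ hNG)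
    obtain ⟨u, rfl⟩ := mem_range_blockTranslations.mp hgR
    exact translation_mem_of_coprime hq hσform hπ' i₀ hσcyc hcop hσN hNG hnormal hσd hgG

/-- Let `q` be prime, `G ≤ AGL₁(q) ≀ S_d` and `N ⊴ G` containing an element `σ` whose block
image is a `d`-cycle and with `σ^d` in the translation part.  Set `G_q = G ∩ C_q^d`,
`N_q = N ∩ C_q^d`, and let `Z` be the intersection of `G_q` with the centralizer of `σ`
(the "diagonal under `σ`").  Then `G_q/Z` embeds into `N_q`; in particular
`[G_q : N_q] ∣ q`; and if moreover `σ` is a `qd`-cycle and `gcd(d,q) = 1`, then `G_q = N_q`. -/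
theorem normal_subgroup_translation_part_index
    (q d : ℕ) (hq : q.Prime) (hd : 0 < d)
    (G N : Subgroup (Equiv.Perm (Fin d × ZMod q)))
    (hG : ∀ g ∈ G, IsAGLWreath q d g)
    (hNG : N ≤ G) (hnormal : ∀ g ∈ G, ∀ n ∈ N, g * n * g⁻¹ ∈ N)
    (σ : Equiv.Perm (Fin d × ZMod q)) (hσN : σ ∈ N)
    (π : Equiv.Perm (Fin d)) (a : Fin d → (ZMod q)ˣ) (b : Fin d → ZMod q)
    (hσform : ∀ (i : Fin d) (x : ZMod q), σ (i, x) = (π i, (a i : ZMod q) * x + b i))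
    (hπ : π.IsCycle ∧ ∀ i : Fin d, π i ≠ i)
    (hσd : σ ^ d ∈ (blockTranslations q d).range) :
    (∃ f : ↥((blockTranslations q d).range ⊓ G) →* ↥((blockTranslations q d).range ⊓ N),
      ∀ x : ↥((blockTranslations q d).range ⊓ G),
        f x = 1 ↔ (x : Equiv.Perm (Fin d × ZMod q)) ∈
          (blockTranslations q d).range ⊓ G ⊓ Subgroup.centralizer {σ}) ∧
    ((((blockTranslations q d).range ⊓ N).subgroupOf
        ((blockTranslations q d).range ⊓ G)).index ∣ q) ∧
    ((σ.IsCycle ∧ ∀ z : Fin d × ZMod q, σ z ≠ z) → Nat.Coprime d q →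
      (blockTranslations q d).range ⊓ G = (blockTranslations q d).range ⊓ N) :=
  normal_subgroup_translation_part_index_general q d hq G N hNG hnormal σ hσN π a b hσform hπ hσd
end

section
/- Let $q$ be a prime and $d=q^r$ with $r\ge 1$. Let $G\le\mathrm{AGL}_1(q)\wr S_d$ contain an element $\sigma$ mapping to a $d$-cycle in $S_d$, set $G_q:=G\cap C_q^d$, and let $e$ be the rank of the elementary abelian group $G_q$. Then every Sylow $q$-subgroup of $G$ has nilpotency class at least $e$. -/
/-!
The translations `V := G ∩ C_q^d` form an abelian normal `q`-subgroup of `G`, hence lie in every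
Sylow `q`-subgroup `Q`. The `q`-part of `σ` has a conjugate `t ∈ Q`, and `t` still permutes the
blocks by a `d`-cycle `ρ`, since a power of a `d`-cycle prime to `d = q^r` is again a `d`-cycle.
On `V` the map `x ↦ ⁅x, t⁆` is an endomorphism `δ` whose `k`-th iterate lands in the `k`-th term
of the lower central series of `Q`. If `t (i, x) = (ρ i, α i * x + β i)`, the kernel of `δ` consists
of the translations by `c` with `c (ρ j) = α j * c j`; such `c` is determined by one coordinate,
so `|ker δ| ≤ q` and `|δ^k V| ≥ q^(e-k) > 1` for `k < e`.
-/

open Equiv Subgroup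
open scoped commutatorElement

section GroupTheory
variable {G : Type*} [Group G]

theorem Subgroup.card_le_card_map_mul_card_ker {G' : Type*} [Group G'] (f : G →* G')
    (K : Subgroup G) [Finite f.ker] :
    Nat.card K ≤ Nat.card (K.map f) * Nat.card f.ker := by
  have h := relIndex_mul_relIndex ⊥ (f.ker ⊓ K) K bot_le inf_le_right
  rw [relIndex_bot_left, relIndex_bot_left, inf_relIndex_right, relIndex_ker] at h
  rw [← h, mul_comm]
  exact Nat.mul_le_mul_left _ (card_le_of_le inf_le_left)

theorem MonoidHom.card_le_card_iterate_map_mul [Finite G] (f : G →* G) (k : ℕ) :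
    Nat.card G ≤ Nat.card ((map f)^[k] ⊤) * Nat.card f.ker ^ k := by
  induction k with
  | zero => simp
  | succ k ih =>
    calc Nat.card G ≤ Nat.card ((map f)^[k] ⊤) * Nat.card f.ker ^ k := ih
      _ ≤ Nat.card (((map f)^[k] ⊤).map f) * Nat.card f.ker * Nat.card f.ker ^ k :=
        Nat.mul_le_mul_right _ (card_le_card_map_mul_card_ker f _)
      _ = Nat.card ((map f)^[k + 1] ⊤) * Nat.card f.ker ^ (k + 1) := by
        rw [Function.iterate_succ_apply', pow_succ]; ring

instance Subgroup.inf_isMulCommutative (H K : Subgroup G) [IsMulCommutative H] :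
    IsMulCommutative ↥(H ⊓ K) :=
  .of_comm fun x y => Subtype.ext <| by
    simpa using congrArg (fun z : H => (z : G)) (mul_comm' (⟨x, x.2.1⟩ : H) ⟨y, y.2.1⟩)

variable {V : Subgroup G} {t : G}

theorem commutatorElement_mem_of_mem_normalizer (ht : t ∈ normalizer (V : Set G)) {x : G}
    (hx : x ∈ V) : ⁅x, t⁆ ∈ V := by
  rw [commutatorElement_def, mul_assoc, mul_assoc, ← mul_assoc t]
  exact V.mul_mem hx ((mem_normalizer_iff.mp ht _).mp (V.inv_mem hx))

variable [IsMulCommutative V]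

def commutatorRightHom (ht : t ∈ normalizer (V : Set G)) : V →* V where
  toFun x := ⟨⁅(x : G), t⁆, commutatorElement_mem_of_mem_normalizer ht x.2⟩
  map_one' := by ext; simp
  map_mul' := by
    rintro ⟨x, hx⟩ ⟨y, hy⟩
    -- `⁅xy, t⁆ = x ⁅y, t⁆ (t x⁻¹ t⁻¹)`, and the last two factors lie in the abelian `V`
    have hu : t * x⁻¹ * t⁻¹ ∈ V := (mem_normalizer_iff.mp ht _).mp (V.inv_mem hx)
    have hv := commutatorElement_mem_of_mem_normalizer ht hy
    have huv := congrArg Subtype.val (mul_comm' (⟨_, hu⟩ : V) ⟨_, hv⟩)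
    ext
    change ⁅x * y, t⁆ = ⁅x, t⁆ * ⁅y, t⁆
    simp only [MulMemClass.mk_mul_mk, commutatorElement_def] at huv ⊢
    calc _ = x * ((y * t * y⁻¹ * t⁻¹) * (t * x⁻¹ * t⁻¹)) := by group
      _ = _ := by rw [← huv]; group

theorem commutatorRightHom_apply (ht : t ∈ normalizer (V : Set G)) (x : V) :
    (commutatorRightHom ht x : G) = ⁅(x : G), t⁆ := rfl

theorem ker_commutatorRightHom (ht : t ∈ normalizer (V : Set G)) :
    (commutatorRightHom ht).ker = (centralizer {t}).subgroupOf V := by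
  ext x
  rw [MonoidHom.mem_ker, mem_subgroupOf, mem_centralizer_singleton_iff, Subtype.ext_iff,
    commutatorRightHom_apply, OneMemClass.coe_one, commutatorElement_eq_one_iff_mul_comm, eq_comm]

theorem iterate_map_commutatorRightHom_le {S : Subgroup G} (hVS : V ≤ S) (htS : t ∈ S)
    (ht : t ∈ normalizer (V : Set G)) (k : ℕ) :
    ((map (commutatorRightHom ht))^[k] ⊤).map V.subtype ≤ S.lowerCentralSeries k := by
  induction k with
  | zero => rwa [Function.iterate_zero_apply, ← MonoidHom.range_eq_map, range_subtype]
  | succ k ih =>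
    rw [Function.iterate_succ_apply', map_map, Subgroup.lowerCentralSeries_succ]
    rintro _ ⟨x, hx, rfl⟩
    exact commutator_mem_commutator (ih ⟨x, hx, rfl⟩) htS

theorem card_le_card_inf_lowerCentralSeries_mul [Finite V] {S : Subgroup G} (hVS : V ≤ S)
    (htS : t ∈ S) (ht : t ∈ normalizer (V : Set G)) (k : ℕ) :
    Nat.card V ≤
      Nat.card ↥(V ⊓ S.lowerCentralSeries k) * Nat.card ↥(V ⊓ centralizer {t}) ^ k := by
  have : Finite ↥(V ⊓ S.lowerCentralSeries k) :=
    Finite.of_injective _ (inclusion_injective inf_le_left)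
  have hker : Nat.card (commutatorRightHom ht).ker = Nat.card ↥(V ⊓ centralizer {t}) := by
    rw [ker_commutatorRightHom, ← card_subtype, subgroupOf_map_subtype, inf_comm]
  calc Nat.card V
      ≤ Nat.card ((map (commutatorRightHom ht))^[k] ⊤) * Nat.card (commutatorRightHom ht).ker ^ k :=
        (commutatorRightHom ht).card_le_card_iterate_map_mul k
    _ ≤ _ := by
      rw [← card_subtype, hker]
      refine Nat.mul_le_mul_right _ (card_le_of_le (le_inf ?_ ?_))
      · exact map_subtype_le _
      · exact iterate_map_commutatorRightHom_le hVS htS ht k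

end GroupTheory

section Sylow
variable {G : Type*} [Group G] {p : ℕ}

theorem Sylow.exists_coprime_pow_conj_mem [Finite G] [Fact p.Prime] (Q : Sylow p G) (x : G) :
    ∃ n : ℕ, n.Coprime p ∧ ∃ h : G, h * x ^ n * h⁻¹ ∈ Q := by
  set N := orderOf x
  have hN : N ≠ 0 := (orderOf_pos x).ne'
  have hpow : (x ^ ordCompl[p] N) ^ p ^ N.factorization p = 1 := by
    rw [← pow_mul, mul_comm, Nat.ordProj_mul_ordCompl_eq_self, pow_orderOf_eq_one]
  obtain ⟨j, -, hj⟩ := (Nat.dvd_prime_pow Fact.out).mp (orderOf_dvd_of_pow_eq_one hpow)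
  have hP : IsPGroup p (zpowers (x ^ ordCompl[p] N)) :=
    IsPGroup.of_card (by rw [Nat.card_zpowers, hj])
  obtain ⟨P, hxP⟩ := hP.exists_le_sylow
  obtain ⟨h, rfl⟩ := MulAction.exists_smul_eq G P Q
  refine ⟨_, (Nat.coprime_ordCompl Fact.out hN).symm, h, ?_⟩
  exact Subgroup.smul_mem_pointwise_smul _ (MulAut.conj h) (P : Subgroup G) (hxP (mem_zpowers _))

theorem IsPGroup.le_map_subtype_sylow {H N : Subgroup G} (hN : IsPGroup p N) (hNH : N ≤ H)
    (hH : H ≤ normalizer (N : Set G)) (Q : Sylow p H) : N ≤ (Q : Subgroup H).map H.subtype := by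
  have : (N.subgroupOf H).Normal := (normal_subgroupOf_iff_le_normalizer hNH).mpr hH
  have hNp : IsPGroup p (N.subgroupOf H) :=
    hN.of_equiv (subgroupOfEquivOfLe hNH).symm
  calc N = (N.subgroupOf H).map H.subtype := by rw [subgroupOf_map_subtype, inf_eq_left.mpr hNH]
    _ ≤ _ := map_mono (hNp.le_sylow_of_normal Q)

end Sylow

theorem Equiv.Perm.eq_of_apply_eq_mul_of_sameCycle {ι R : Type*} [Finite ι] [Mul R] {ρ : Perm ι}
    {α c c' : ι → R} (hc : ∀ j, c (ρ j) = α j * c j) (hc' : ∀ j, c' (ρ j) = α j * c' j)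
    {i : ι} (hρ : ∀ j, ρ.SameCycle i j) (hi : c i = c' i) : c = c' := by
  funext j
  obtain ⟨k, -, rfl⟩ := (hρ j).exists_pow_eq'
  induction k with
  | zero => exact hi
  | succ k ih => rw [pow_succ', Perm.mul_apply, hc, hc', ih]

theorem Equiv.Perm.IsCycle.sameCycle_conj_pow {ι : Type*} [Fintype ι] [DecidableEq ι]
    {π : Perm ι} (hπ : π.IsCycle) (hfix : ∀ i, π i ≠ i) {n : ℕ}
    (hn : n.Coprime (Fintype.card ι)) (w : Perm ι) (i j : ι) :
    (w * π ^ n * w⁻¹).SameCycle i j := by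
  have hord : orderOf π = Fintype.card ι := by
    rw [hπ.orderOf, Finset.eq_univ_of_forall fun i => Perm.mem_support.mpr (hfix i),
      Finset.card_univ]
  obtain ⟨m, hm⟩ := exists_pow_eq_self_of_coprime (hord ▸ hn)
  have hcyc := hπ.sameCycle (hfix (w⁻¹ i)) (hfix (w⁻¹ j))
  rw [← hm] at hcyc
  exact sameCycle_conj.mpr hcyc.of_pow

section Wreath
variable {q d : ℕ}

theorem blockTranslations_apply (c : Multiplicative (Fin d → ZMod q)) (i : Fin d) (x : ZMod q) :
    blockTranslations q d c (i, x) = (i, x + Multiplicative.toAdd c i) := rfl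

def IsAffineOver (ρ : Perm (Fin d)) (g : Perm (Fin d × ZMod q)) : Prop :=
  ∃ (a : Fin d → (ZMod q)ˣ) (b : Fin d → ZMod q), ∀ i x, g (i, x) = (ρ i, a i * x + b i)

theorem isAGLWreath_iff {g : Perm (Fin d × ZMod q)} :
    IsAGLWreath q d g ↔ ∃ ρ, IsAffineOver ρ g := Iff.rfl

namespace IsAffineOver
variable {ρ ρ' : Perm (Fin d)} {g g' : Perm (Fin d × ZMod q)}

theorem mul (hg : IsAffineOver ρ g) (hg' : IsAffineOver ρ' g') :
    IsAffineOver (ρ * ρ') (g * g') := by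
  obtain ⟨a, b, h⟩ := hg
  obtain ⟨a', b', h'⟩ := hg'
  refine ⟨fun i => a (ρ' i) * a' i, fun i => a (ρ' i) * b' i + b (ρ' i), fun i x => ?_⟩
  rw [Perm.mul_apply, h', h]
  simp only [Perm.mul_apply, Units.val_mul, Prod.mk.injEq, true_and]
  ring

theorem inv (hg : IsAffineOver ρ g) : IsAffineOver ρ⁻¹ g⁻¹ := by
  obtain ⟨a, b, h⟩ := hg
  refine ⟨fun i => (a (ρ⁻¹ i))⁻¹, fun i => -((a (ρ⁻¹ i))⁻¹ : (ZMod q)ˣ) * b (ρ⁻¹ i), fun i x => ?_⟩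
  rw [Perm.inv_def, Equiv.symm_apply_eq, h]
  simp only [Perm.inv_def, Equiv.apply_symm_apply, Prod.mk.injEq, true_and]
  have hu := Units.mul_inv (a (ρ.symm i))
  linear_combination (b (ρ.symm i) - x) * hu

theorem pow (hg : IsAffineOver ρ g) (n : ℕ) : IsAffineOver (ρ ^ n) (g ^ n) := by
  induction n with
  | zero => exact ⟨1, 0, fun i x => by simp⟩
  | succ n ih => rw [pow_succ, pow_succ]; exact ih.mul hg

theorem conj (hg : IsAffineOver ρ g) {w : Perm (Fin d)} {h : Perm (Fin d × ZMod q)}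
    (hh : IsAffineOver w h) : IsAffineOver (w * ρ * w⁻¹) (h * g * h⁻¹) :=
  (hh.mul hg).mul hh.inv

theorem conj_mem_range (hg : IsAffineOver ρ g) {x : Perm (Fin d × ZMod q)}
    (hx : x ∈ (blockTranslations q d).range) : g * x * g⁻¹ ∈ (blockTranslations q d).range := by
  obtain ⟨a, b, h⟩ := hg
  obtain ⟨c, rfl⟩ := hx
  refine ⟨Multiplicative.ofAdd fun j => a (ρ⁻¹ j) * Multiplicative.toAdd c (ρ⁻¹ j), ?_⟩
  rw [eq_mul_inv_iff_mul_eq]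
  ext ⟨i, x⟩ : 1
  rw [Perm.mul_apply, Perm.mul_apply, h, h, blockTranslations_apply, blockTranslations_apply]
  simp only [toAdd_ofAdd, Perm.coe_inv, symm_apply_apply, Prod.mk.injEq, true_and]
  ring

theorem mem_normalizer_range (hg : IsAffineOver ρ g) :
    g ∈ normalizer ((blockTranslations q d).range : Set (Perm (Fin d × ZMod q))) := by
  refine mem_normalizer_iff.mpr fun x => ⟨hg.conj_mem_range, fun hx => ?_⟩
  simpa [mul_assoc] using hg.inv.conj_mem_range hx

end IsAffineOver

theorem apply_eq_mul_of_commute_blockTranslations {ρ : Perm (Fin d)} {a : Fin d → (ZMod q)ˣ}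
    {b : Fin d → ZMod q} {t : Perm (Fin d × ZMod q)}
    (ht : ∀ i x, t (i, x) = (ρ i, a i * x + b i)) {c : Multiplicative (Fin d → ZMod q)}
    (hc : blockTranslations q d c * t = t * blockTranslations q d c) (j : Fin d) :
    Multiplicative.toAdd c (ρ j) = a j * Multiplicative.toAdd c j := by
  have := congrArg (fun g : Perm (Fin d × ZMod q) => (g (j, 0)).2) hc
  simp only [Perm.mul_apply, blockTranslations_apply, ht] at this
  linear_combination this

theorem card_blockTranslations_range_inf_centralizer_le [NeZero q] {ρ : Perm (Fin d)}
    {t : Perm (Fin d × ZMod q)} (ht : IsAffineOver ρ t) {i : Fin d} (hρ : ∀ j, ρ.SameCycle i j) :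
    Nat.card ↥((blockTranslations q d).range ⊓ centralizer {t}) ≤ q := by
  obtain ⟨a, b, ht⟩ := ht
  calc _ ≤ Nat.card (ZMod q) := Nat.card_le_card_of_injective
        (fun x : ↥((blockTranslations q d).range ⊓ centralizer {t}) => ((x : Perm _) (i, 0)).2) ?_
    _ = q := Nat.card_zmod q
  rintro ⟨_, ⟨c, rfl⟩, hc⟩ ⟨_, ⟨c', rfl⟩, hc'⟩ hcc'
  replace hc := mem_centralizer_singleton_iff.mp hc
  replace hc' := mem_centralizer_singleton_iff.mp hc'
  have := Perm.eq_of_apply_eq_mul_of_sameCycle (apply_eq_mul_of_commute_blockTranslations ht hc)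
    (apply_eq_mul_of_commute_blockTranslations ht hc') hρ
    (by simpa [blockTranslations_apply] using hcc')
  obtain rfl := Multiplicative.toAdd.injective this
  rfl

end Wreath

theorem sylow_nilpotency_class_ge_rank_general
    (q r : ℕ) (hq : q.Prime) (d : ℕ) (hd : d = q ^ r)
    (G : Subgroup (Equiv.Perm (Fin d × ZMod q)))
    (hG : ∀ g ∈ G, IsAGLWreath q d g)
    (σ : Equiv.Perm (Fin d × ZMod q)) (hσG : σ ∈ G)
    (π : Equiv.Perm (Fin d)) (a : Fin d → (ZMod q)ˣ) (b : Fin d → ZMod q)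
    (hσform : ∀ (i : Fin d) (x : ZMod q), σ (i, x) = (π i, (a i : ZMod q) * x + b i))
    (hπ : π.IsCycle ∧ ∀ i : Fin d, π i ≠ i)
    (e : ℕ) (he : Nat.card ↥((blockTranslations q d).range ⊓ G) = q ^ e) :
    ∀ Q : Sylow q ↥G, ∀ m : ℕ, m < e →
      (⊤ : Subgroup ↥(Q : Subgroup ↥G)).lowerCentralSeries m ≠ ⊥ := by
  intro Q m hm hbot
  have : Fact q.Prime := ⟨hq⟩
  have : NeZero q := ⟨hq.ne_zero⟩
  set V := (blockTranslations q d).range ⊓ G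
  set P := (Q : Subgroup G).map G.subtype
  have hnormalizer : ∀ g ∈ G, g ∈ normalizer (V : Set (Perm (Fin d × ZMod q))) := fun g hg =>
    have ⟨_, hg'⟩ := isAGLWreath_iff.mp (hG g hg)
    inf_normalizer_le_normalizer_inf ⟨hg'.mem_normalizer_range, le_normalizer hg⟩
  have hVP : V ≤ P := (IsPGroup.of_card he).le_map_subtype_sylow inf_le_right hnormalizer Q
  obtain ⟨n, hn, h, hmem⟩ := Q.exists_coprime_pow_conj_mem ⟨σ, hσG⟩
  set t : Perm (Fin d × ZMod q) := h * σ ^ n * (h : Perm (Fin d × ZMod q))⁻¹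
  have htP : t ∈ P := ⟨_, hmem, rfl⟩
  obtain ⟨w, hw⟩ := isAGLWreath_iff.mp (hG h h.2)
  have ht : IsAffineOver (w * π ^ n * w⁻¹) t := (IsAffineOver.pow ⟨a, b, hσform⟩ n).conj hw
  have hcop : n.Coprime (Fintype.card (Fin d)) := by
    rw [Fintype.card_fin, hd]; exact hn.pow_right r
  have hcent : Nat.card ↥(V ⊓ centralizer {t}) ≤ q :=
    (card_le_of_le (inf_le_inf_right _ inf_le_left)).trans
      (card_blockTranslations_range_inf_centralizer_le ht
        (hπ.1.sameCycle_conj_pow hπ.2 hcop w ⟨0, hd ▸ pow_pos hq.pos r⟩))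
  have hlcs : P.lowerCentralSeries m = ⊥ := by
    rw [← map_lowerCentralSeries, ← top_subtype_lowerCentralSeries, hbot, Subgroup.map_bot,
      Subgroup.map_bot]
  have key := card_le_card_inf_lowerCentralSeries_mul hVP htP
    (hnormalizer t (map_subtype_le _ htP)) m
  rw [hlcs, inf_bot_eq, card_bot, one_mul, he] at key
  have hle : q ^ e ≤ q ^ m := key.trans (Nat.pow_le_pow_left hcent m)
  exact absurd ((Nat.pow_le_pow_iff_right hq.one_lt).mp hle) (not_le.mpr hm)

/-- Let `q` be prime, `d = q^r` (`r ≥ 1`), `G ≤ AGL₁(q) ≀ S_d` containing an element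
mapping to a `d`-cycle on the blocks, and let `e` be the rank of the elementary abelian
group `G_q := G ∩ C_q^d` (so `|G_q| = q^e`).  Then every Sylow `q`-subgroup of `G` has
nilpotency class at least `e` (its lower central series does not reach the trivial group
before step `e`). -/
theorem sylow_nilpotency_class_ge_rank
    (q r : ℕ) (hq : q.Prime) (hr : 1 ≤ r) (d : ℕ) (hd : d = q ^ r)
    (G : Subgroup (Equiv.Perm (Fin d × ZMod q)))
    (hG : ∀ g ∈ G, IsAGLWreath q d g)
    (σ : Equiv.Perm (Fin d × ZMod q)) (hσG : σ ∈ G)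
    (π : Equiv.Perm (Fin d)) (a : Fin d → (ZMod q)ˣ) (b : Fin d → ZMod q)
    (hσform : ∀ (i : Fin d) (x : ZMod q), σ (i, x) = (π i, (a i : ZMod q) * x + b i))
    (hπ : π.IsCycle ∧ ∀ i : Fin d, π i ≠ i)
    (e : ℕ) (he : Nat.card ↥((blockTranslations q d).range ⊓ G) = q ^ e) :
    ∀ Q : Sylow q ↥G, ∀ m : ℕ, m < e →
      (⊤ : Subgroup ↥(Q : Subgroup ↥G)).lowerCentralSeries m ≠ ⊥ :=
  sylow_nilpotency_class_ge_rank_general q r hq d hd G hG σ hσG π a b hσform hπ e he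
end

section
/- Let $L/K$ and $M/K$ be finite separable field extensions that form a minimally reducible pair, i.e., $L$ and $M$ are not linearly disjoint over $K$, but for any intermediate fields $K\subseteq L_1\subseteq L$ and $K\subseteq M_1\subseteq M$ with $(L_1,M_1)\ne(L,M)$, the extensions $L_1/K$ and $M_1/K$ are linearly disjoint. Then the Galois closures of $L/K$ and of $M/K$ coincide. -/
open IntermediateField

/-- Two finite separable extensions `L/K`, `M/K` inside an algebraic closure are linearly
disjoint (in the degree sense) if `[L⊔M : K] = [L:K]·[M:K]`. -/
def LinDisjDeg (K : Type*) [Field K]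
    (L M : IntermediateField K (AlgebraicClosure K)) : Prop :=
  Module.finrank K ↥(L ⊔ M) = Module.finrank K ↥L * Module.finrank K ↥M

/-!
If `M` were not contained in the Galois closure `Ω` of `L`, then `Ω ⊓ M` would be a proper
subfield of `M`, hence linearly disjoint from `L` by minimality. As `Ω/K` is Galois,
`[Ω ⊔ M : K] [Ω ⊓ M : K] = [Ω : K] [M : K]` (natural irrationalities), and since
`L ⊔ (Ω ⊓ M) ≤ Ω ⊓ (L ⊔ M)` a degree count then makes `L` and `M` linearly disjoint,
a contradiction. So `M ≤ Ω`, symmetrically `L` lies in the Galois closure of `M`, and the two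
Galois closures coincide.
-/

open Module

namespace IntermediateField

variable {K E : Type*} [Field K] [Field E] [Algebra K E]

theorem isSeparable_normalClosure (L : IntermediateField K E) [Algebra.IsSeparable K L] :
    Algebra.IsSeparable K (normalClosure K L E) := by
  have (f : L →ₐ[K] E) : Algebra.IsSeparable K f.fieldRange :=
    .of_algHom _ _ (AlgEquiv.ofInjectiveField f).symm.toAlgHom
  rw [normalClosure_def]
  infer_instance

/-- Over `Ω ⊓ M`, the Galois extension `Ω` is linearly disjoint from `M`. -/
theorem finrank_sup_mul_finrank_inf_of_isGalois (Ω M : IntermediateField K E)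
    [IsGalois K Ω] [FiniteDimensional K Ω] [FiniteDimensional K M] :
    finrank K ↥(Ω ⊔ M) * finrank K ↥(Ω ⊓ M) = finrank K Ω * finrank K M := by
  set D := Ω ⊓ M
  let Ω' := extendScalars (inf_le_left : D ≤ Ω)
  let M' := extendScalars (inf_le_right : D ≤ M)
  have : IsGalois K Ω' := inferInstanceAs (IsGalois K Ω)
  have : IsGalois D Ω' := IsGalois.tower_top_of_isGalois K D Ω'
  have : FiniteDimensional K Ω' := inferInstanceAs (FiniteDimensional K Ω)
  have : FiniteDimensional K M' := inferInstanceAs (FiniteDimensional K M)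
  have : FiniteDimensional D Ω' := .right K D Ω'
  have : FiniteDimensional D M' := .right K D M'
  have hdisj : Ω'.LinearDisjoint M' := .of_inf_eq_bot <| by
    rw [extendScalars_inf]
    exact extendScalars_self D
  have hsup := hdisj.finrank_sup
  rw [extendScalars_sup] at hsup
  simp only [Ω', M', ← relfinrank_eq_finrank_of_le] at hsup
  rw [← finrank_bot_mul_relfinrank (inf_le_left : D ≤ Ω),
    ← finrank_bot_mul_relfinrank (inf_le_right : D ≤ M),
    ← finrank_bot_mul_relfinrank (le_sup_of_le_left inf_le_left : D ≤ Ω ⊔ M), hsup]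
  ring

theorem finrank_sup_eq_mul_of_finrank_sup_inf_eq_mul {L M Ω : IntermediateField K E}
    [IsGalois K Ω] [FiniteDimensional K Ω] [FiniteDimensional K L] [FiniteDimensional K M]
    (hL : L ≤ Ω) (h : finrank K ↥(L ⊔ Ω ⊓ M) = finrank K L * finrank K ↥(Ω ⊓ M)) :
    finrank K ↥(L ⊔ M) = finrank K L * finrank K M := by
  have hΩM := finrank_sup_mul_finrank_inf_of_isGalois Ω M
  have hΩLM := finrank_sup_mul_finrank_inf_of_isGalois Ω (L ⊔ M)
  rw [← sup_assoc, sup_eq_left.2 hL] at hΩLM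
  have hle : finrank K ↥(L ⊔ Ω ⊓ M) ≤ finrank K ↥(Ω ⊓ (L ⊔ M)) :=
    finrank_le_of_le_right <|
      le_inf (sup_le hL inf_le_left) (sup_le_sup_left inf_le_right L)
  refine (finrank_sup_le L M).antisymm <| Nat.le_of_mul_le_mul_left ?_
    (Nat.mul_pos finrank_pos finrank_pos : 0 < finrank K Ω * finrank K ↥(Ω ⊓ M))
  calc finrank K Ω * finrank K ↥(Ω ⊓ M) * (finrank K L * finrank K M)
      = finrank K ↥(Ω ⊔ M) * finrank K ↥(Ω ⊓ M) * finrank K ↥(L ⊔ Ω ⊓ M) := by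
        rw [h, hΩM]; ring
    _ ≤ finrank K ↥(Ω ⊔ M) * finrank K ↥(Ω ⊓ M) * finrank K ↥(Ω ⊓ (L ⊔ M)) := by gcongr
    _ = finrank K Ω * finrank K ↥(Ω ⊓ M) * finrank K ↥(L ⊔ M) := by
        rw [mul_right_comm, hΩLM]; ring

theorem le_normalClosure_of_forall_lt [Normal K E] {L M : IntermediateField K E}
    [FiniteDimensional K L] [FiniteDimensional K M] [Algebra.IsSeparable K L]
    (hLM : finrank K ↥(L ⊔ M) ≠ finrank K L * finrank K M)
    (hmin : ∀ M₁ < M, finrank K ↥(L ⊔ M₁) = finrank K L * finrank K M₁) :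
    M ≤ normalClosure K L E := by
  have := isSeparable_normalClosure L
  have : IsGalois K (normalClosure K L E) := {}
  by_contra hM
  exact hLM <| finrank_sup_eq_mul_of_finrank_sup_inf_eq_mul (le_normalClosure L) <|
    hmin _ (inf_le_right.lt_of_ne fun h => hM (inf_eq_right.1 h))

end IntermediateField

theorem linDisjDeg_comm {K : Type*} [Field K] {L M : IntermediateField K (AlgebraicClosure K)} :
    LinDisjDeg K L M ↔ LinDisjDeg K M L := by
  rw [LinDisjDeg, LinDisjDeg, sup_comm, mul_comm]

/-- If finite separable extensions `L/K` and `M/K` form a minimally reducible pair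
(they are not linearly disjoint, but every proper pair of subextensions is linearly
disjoint), then their Galois closures coincide. -/
theorem galois_closures_coincide_of_minimally_reducible
    (K : Type*) [Field K]
    (L M : IntermediateField K (AlgebraicClosure K))
    [FiniteDimensional K ↥L] [FiniteDimensional K ↥M]
    [Algebra.IsSeparable K ↥L] [Algebra.IsSeparable K ↥M]
    (hnd : ¬ LinDisjDeg K L M)
    (hmin : ∀ L₁ M₁ : IntermediateField K (AlgebraicClosure K),
      L₁ ≤ L → M₁ ≤ M → ¬(L₁ = L ∧ M₁ = M) → LinDisjDeg K L₁ M₁) :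
    normalClosure K ↥L (AlgebraicClosure K) = normalClosure K ↥M (AlgebraicClosure K) := by
  have hM : M ≤ normalClosure K L _ := le_normalClosure_of_forall_lt hnd
    fun M₁ hM₁ => hmin L M₁ le_rfl hM₁.le fun h => hM₁.ne h.2
  have hL : L ≤ normalClosure K M _ := le_normalClosure_of_forall_lt (mt linDisjDeg_comm.2 hnd)
    fun L₁ hL₁ => linDisjDeg_comm.1 (hmin L₁ M hL₁.le le_rfl fun h => hL₁.ne h.1)
  exact le_antisymm (normalClosure_le_iff_of_normal.2 hL) (normalClosure_le_iff_of_normal.2 hM)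
end
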